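/- Let θ ∼ U(-1,1), Δ ∈ (0,1), and Q(θ) = ((1+Δ)/2)·m(θ) with m the ternary mask (m(θ)=1 if θ>Δ, -1 if θ<-Δ, 0 otherwise). Then the mean squared quantization error is E[(θ - Q(θ))²] = 1/3 - (1-Δ)(1+Δ)²/4. -/

import Mathlib

open MeasureTheory ProbabilityTheory

/-- The uniform probability measure on the interval `[-1, 1]`. -/
noncomputable def unif : Measure ℝ :=
  (2 : ENNReal)⁻¹ • (volume.restrict (Set.Icc (-1 : ℝ) 1))

/-- The ternary mask with threshold `Δ`. -/
noncomputable def mask (Δ x : ℝ) : ℝ :=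
  if Δ < x then 1 else if x < -Δ then -1 else 0

/-!
The mask is constant on each of `(-1, -Δ)`, `(-Δ, Δ)` and `(Δ, 1)`, so there the squared error is
the square of a translate of `x`, and the expectation is a sum of three integrals of `(x + c) ^ 2`.
-/

open Set intervalIntegral

theorem integral_unif (f : ℝ → ℝ) : ∫ x, f x ∂unif = 2⁻¹ * ∫ x in (-1 : ℝ)..1, f x := by
  rw [unif, MeasureTheory.integral_smul_measure, integral_of_le (by norm_num), ← integral_Icc_eq_integral_Ioc]
  norm_num

section mask

variable {Δ x : ℝ}

theorem mask_of_lt (h : Δ < x) : mask Δ x = 1 := if_pos h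

theorem mask_of_lt_neg (hΔ : 0 ≤ Δ) (h : x < -Δ) : mask Δ x = -1 := by
  rw [mask, if_neg (by linarith), if_pos h]

theorem mask_of_mem_Icc (h : x ∈ Icc (-Δ) Δ) : mask Δ x = 0 := by
  rw [mask, if_neg h.2.not_gt, if_neg h.1.not_gt]

end mask

theorem integral_eq_add_add_of_eqOn_uIoo {f g₁ g₂ g₃ : ℝ → ℝ} {a b c d : ℝ}
    (h₁ : EqOn f g₁ (uIoo a b)) (h₂ : EqOn f g₂ (uIoo b c)) (h₃ : EqOn f g₃ (uIoo c d))
    (hg₁ : IntervalIntegrable g₁ volume a b) (hg₂ : IntervalIntegrable g₂ volume b c)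
    (hg₃ : IntervalIntegrable g₃ volume c d) :
    ∫ x in a..d, f x = (∫ x in a..b, g₁ x) + (∫ x in b..c, g₂ x) + ∫ x in c..d, g₃ x := by
  have hf₁ := hg₁.congr_uIoo h₁.symm
  have hf₂ := hg₂.congr_uIoo h₂.symm
  have hf₃ := hg₃.congr_uIoo h₃.symm
  rw [← integral_congr_uIoo h₁, ← integral_congr_uIoo h₂, ← integral_congr_uIoo h₃,
    integral_add_adjacent_intervals hf₁ hf₂, integral_add_adjacent_intervals (hf₁.trans hf₂) hf₃]

theorem integral_add_sq (a b c : ℝ) :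
    ∫ x in a..b, (x + c) ^ 2 = ((b + c) ^ 3 - (a + c) ^ 3) / 3 := by
  rw [integral_comp_add_right (fun x => x ^ 2), integral_pow]
  norm_num

theorem fttq_mse (Δ : ℝ) (hΔ : 0 < Δ) (hΔ1 : Δ < 1) :
    (∫ x, (x - ((1 + Δ) / 2) * mask Δ x) ^ 2 ∂unif)
      = 1 / 3 - (1 - Δ) * (1 + Δ) ^ 2 / 4 := by
  set w := (1 + Δ) / 2
  have hneg : EqOn (fun x => (x - w * mask Δ x) ^ 2) (fun x => (x + w) ^ 2) (uIoo (-1) (-Δ)) := by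
    intro x hx
    rw [uIoo_of_le (by linarith)] at hx
    simp only [mask_of_lt_neg hΔ.le hx.2]
    ring
  have hmid : EqOn (fun x => (x - w * mask Δ x) ^ 2) (fun x => (x + 0) ^ 2) (uIoo (-Δ) Δ) := by
    intro x hx
    rw [uIoo_of_le (by linarith)] at hx
    simp only [mask_of_mem_Icc (Ioo_subset_Icc_self hx)]
    ring
  have hpos : EqOn (fun x => (x - w * mask Δ x) ^ 2) (fun x => (x + -w) ^ 2) (uIoo Δ 1) := by
    intro x hx
    rw [uIoo_of_le hΔ1.le] at hx
    simp only [mask_of_lt hx.1]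
    ring
  have hint (c a b : ℝ) : IntervalIntegrable (fun x => (x + c) ^ 2) volume a b :=
    (by fun_prop : Continuous fun x : ℝ => (x + c) ^ 2).intervalIntegrable a b
  rw [integral_unif, integral_eq_add_add_of_eqOn_uIoo hneg hmid hpos (hint _ _ _) (hint _ _ _)
      (hint _ _ _), integral_add_sq, integral_add_sq, integral_add_sq]
  ring
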